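/- Let $x\in\Gamma_n(A,u,v)\cap W_{\tau,n}$ with $n\ge2$, $\tau>1$, $\gcd(u,v)=1$. Then for all sufficiently large $q$, any integers $p_1,\dots,p_n$ with $|x_i - p_i/q| < q^{-\tau}$ for all $i$ satisfy $(p_1/q,\dots,p_n/q)\in\Gamma_n(A,u,v)$, i.e., $v\sum_i a_i p_i = u q$. Consequently $\Gamma_n(A,u,v)\cap W_{\tau,n}$ equals the set of points in $\Gamma_n(A,u,v)$ that are $\tau$-approximable by infinitely many rational points lying on $\Gamma_n(A,u,v)$ itself. -/

import Mathlib

/-!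
If `∑ aᵢ xᵢ = u / v` and every `|xᵢ - pᵢ / q| < q ^ (-τ)`, then the integer `v ∑ aᵢ pᵢ - u q`
equals `v q ∑ aᵢ (pᵢ / q - xᵢ)`, whose absolute value is at most `|v| (∑ |aᵢ|) q ^ (1 - τ)`.
For `τ > 1` this tends to `0`, so for all large `q` the integer vanishes. In particular, among
the infinitely many denominators approximating `x`, all but finitely many belong to rational
points of the hyperplane itself.
-/

open Filter Topology

theorem abs_sum_mul_sub_sum_mul_le {ι : Type*} [Fintype ι] (a x y : ι → ℝ) {ε : ℝ}
    (h : ∀ i, |x i - y i| ≤ ε) :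
    |∑ i, a i * x i - ∑ i, a i * y i| ≤ (∑ i, |a i|) * ε := by
  rw [← Finset.sum_sub_distrib, Finset.sum_mul]
  refine (Finset.abs_sum_le_sum_abs _ _).trans (Finset.sum_le_sum fun i _ => ?_)
  rw [← mul_sub, abs_mul]
  exact mul_le_mul_of_nonneg_left (h i) (abs_nonneg _)

theorem linear_eq_of_abs_sub_le {ι : Type*} [Fintype ι] (a : ι → ℤ) {u v : ℤ} (hv : v ≠ 0)
    {x : ι → ℝ} (hx : ∑ i, (a i : ℝ) * x i = u / v) {q : ℕ} (hq : 0 < q) {p : ι → ℤ} {ε : ℝ}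
    (hp : ∀ i, |x i - p i / q| ≤ ε) (hε : |(v : ℝ)| * (∑ i, |(a i : ℝ)|) * q * ε < 1) :
    v * ∑ i, a i * p i = u * q := by
  have hdiff : ((v * ∑ i, a i * p i - u * q : ℤ) : ℝ) =
      v * q * (∑ i, (a i : ℝ) * (p i / q) - ∑ i, (a i : ℝ) * x i) := by
    have hv' : (v : ℝ) ≠ 0 := Int.cast_ne_zero.mpr hv
    have hq' : (q : ℝ) ≠ 0 := Nat.cast_ne_zero.mpr hq.ne'
    rw [hx]
    push_cast
    simp only [mul_div_assoc', ← Finset.sum_div]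
    field_simp
  have hclose := abs_sum_mul_sub_sum_mul_le (fun i => (a i : ℝ)) (fun i => p i / q) x
    (fun i => (abs_sub_comm _ _).trans_le (hp i))
  have hsmall : |v * ∑ i, a i * p i - u * q| < 1 := by
    rw [← Int.cast_lt (R := ℝ), Int.cast_one, Int.cast_abs, hdiff, abs_mul, abs_mul, Nat.abs_cast]
    calc |(v : ℝ)| * q * |∑ i, (a i : ℝ) * (p i / q) - ∑ i, (a i : ℝ) * x i|
        ≤ |(v : ℝ)| * q * ((∑ i, |(a i : ℝ)|) * ε) := by gcongr
      _ = |(v : ℝ)| * (∑ i, |(a i : ℝ)|) * q * ε := by ring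
      _ < 1 := hε
  exact sub_eq_zero.mp (Int.abs_lt_one_iff.mp hsmall)

theorem eventually_mul_mul_one_div_rpow_lt_one {τ : ℝ} (hτ : 1 < τ) (C : ℝ) :
    ∀ᶠ q : ℕ in atTop, C * q * (1 / (q : ℝ) ^ τ) < 1 := by
  have hlim : Tendsto (fun q : ℕ => C * (q : ℝ) ^ (-(τ - 1))) atTop (𝓝 0) := by
    simpa only [mul_zero, Function.comp_def] using ((tendsto_rpow_neg_atTop (sub_pos.mpr hτ)).comp
      tendsto_natCast_atTop_atTop).const_mul C
  filter_upwards [hlim.eventually_lt_const one_pos, eventually_gt_atTop 0] with q hlt hq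
  have hq' : (0 : ℝ) < q := Nat.cast_pos.mpr hq
  rwa [mul_assoc, one_div, ← Real.rpow_neg hq'.le, ← Real.rpow_one_add' hq'.le (by linarith),
    show 1 + -τ = -(τ - 1) by ring]

theorem eventually_linear_eq_of_approx {ι : Type*} [Fintype ι] {τ : ℝ} (hτ : 1 < τ)
    (a : ι → ℤ) {u v : ℤ} (hv : v ≠ 0) {x : ι → ℝ} (hx : ∑ i, (a i : ℝ) * x i = u / v) :
    ∀ᶠ q : ℕ in atTop, ∀ p : ι → ℤ, (∀ i, |x i - p i / q| < 1 / (q : ℝ) ^ τ) →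
      v * ∑ i, a i * p i = u * q := by
  filter_upwards [eventually_gt_atTop 0,
    eventually_mul_mul_one_div_rpow_lt_one hτ (|(v : ℝ)| * ∑ i, |(a i : ℝ)|)] with q hq hlt p hp
  exact linear_eq_of_abs_sub_le a hv hx hq (fun i => (hp i).le) hlt

theorem approximations_lie_on_hyperplane_general
    (n : ℕ) (τ : ℝ) (hτ : 1 < τ)
    (a : Fin n → ℤ)
    (u v : ℕ) (hv : 0 < v)
    (Γ W : Set (Fin n → ℝ))
    (hΓ : Γ = {x : Fin n → ℝ | ∑ i, (a i : ℝ) * x i = (u : ℝ) / (v : ℝ)})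
    (hW : W = {x : Fin n → ℝ |
      {q : ℕ | 0 < q ∧ ∃ p : Fin n → ℤ,
        ∀ i, |x i - (p i : ℝ) / (q : ℝ)| < 1 / (q : ℝ) ^ τ}.Infinite}) :
    (∀ x ∈ Γ ∩ W, ∃ N : ℕ, ∀ q : ℕ, N ≤ q → ∀ p : Fin n → ℤ,
      (∀ i, |x i - (p i : ℝ) / (q : ℝ)| < 1 / (q : ℝ) ^ τ) →
        (v : ℤ) * ∑ i, a i * p i = (u : ℤ) * (q : ℤ)) ∧
    Γ ∩ W = {x : Fin n → ℝ | x ∈ Γ ∧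
      {q : ℕ | 0 < q ∧ ∃ p : Fin n → ℤ,
        (∀ i, |x i - (p i : ℝ) / (q : ℝ)| < 1 / (q : ℝ) ^ τ) ∧
        (v : ℤ) * ∑ i, a i * p i = (u : ℤ) * (q : ℤ)}.Infinite} := by
  have eventually_on_Γ : ∀ x ∈ Γ, ∀ᶠ q : ℕ in atTop, ∀ p : Fin n → ℤ,
      (∀ i, |x i - (p i : ℝ) / (q : ℝ)| < 1 / (q : ℝ) ^ τ) →
        (v : ℤ) * ∑ i, a i * p i = (u : ℤ) * (q : ℤ) := by
    intro x hx
    rw [hΓ, Set.mem_ofPred_eq] at hx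
    exact eventually_linear_eq_of_approx hτ a (Int.natCast_ne_zero.mpr hv.ne')
      (by simpa only [Int.cast_natCast] using hx)
  refine ⟨fun x hx => eventually_atTop.mp (eventually_on_Γ x hx.1), ?_⟩
  subst hW
  ext x
  refine ⟨fun ⟨hxΓ, hxW⟩ => ⟨hxΓ, ?_⟩, fun ⟨hxΓ, hx⟩ => ⟨hxΓ, hx.mono ?_⟩⟩
  · rw [Set.mem_ofPred_eq, ← Nat.frequently_atTop_iff_infinite] at hxW
    rw [← Nat.frequently_atTop_iff_infinite]
    exact (hxW.and_eventually (eventually_on_Γ x hxΓ)).mono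
      fun q ⟨⟨hq, p, hp⟩, h⟩ => ⟨hq, p, hp, h p hp⟩
  · exact fun q ⟨hq, p, hp, _⟩ => ⟨hq, p, hp⟩

theorem approximations_lie_on_hyperplane
    (n : ℕ) (hn : 2 ≤ n) (τ : ℝ) (hτ : 1 < τ)
    (a : Fin n → ℤ) (ha : a ≠ 0)
    (u v : ℕ) (hu : 0 < u) (hv : 0 < v) (huv : Nat.Coprime u v)
    (Γ W : Set (Fin n → ℝ))
    (hΓ : Γ = {x : Fin n → ℝ | ∑ i, (a i : ℝ) * x i = (u : ℝ) / (v : ℝ)})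
    (hW : W = {x : Fin n → ℝ |
      {q : ℕ | 0 < q ∧ ∃ p : Fin n → ℤ,
        ∀ i, |x i - (p i : ℝ) / (q : ℝ)| < 1 / (q : ℝ) ^ τ}.Infinite}) :
    (∀ x ∈ Γ ∩ W, ∃ N : ℕ, ∀ q : ℕ, N ≤ q → ∀ p : Fin n → ℤ,
      (∀ i, |x i - (p i : ℝ) / (q : ℝ)| < 1 / (q : ℝ) ^ τ) →
        (v : ℤ) * ∑ i, a i * p i = (u : ℤ) * (q : ℤ)) ∧
    Γ ∩ W = {x : Fin n → ℝ | x ∈ Γ ∧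
      {q : ℕ | 0 < q ∧ ∃ p : Fin n → ℤ,
        (∀ i, |x i - (p i : ℝ) / (q : ℝ)| < 1 / (q : ℝ) ^ τ) ∧
        (v : ℤ) * ∑ i, a i * p i = (u : ℤ) * (q : ℤ)}.Infinite} :=
  approximations_lie_on_hyperplane_general n τ hτ a u v hv Γ W hΓ hW
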